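/- arXiv:2106.09823 — 3 statements merged into one kernel-verified Lean document; each statement's English description precedes it below -/
import Mathlib

section
/- For any nonempty graphs G and H (both having at least one edge), max{p_o(G), p_o(H)} ≤ p_o(G × H) ≤ p_o(G)·p_o(H), where G × H is the direct (tensor) product. -/
open SimpleGraph

variable {V W : Type*}

/-- The two-step graph: vertices adjacent iff they share a common neighbor in `G`. -/
def SimpleGraph.twoStep (G : SimpleGraph V) : SimpleGraph V where
  Adj u v := u ≠ v ∧ ∃ w, G.Adj w u ∧ G.Adj w v
  symm := ⟨fun u v ⟨h, w, h1, h2⟩ => ⟨h.symm, w, h2, h1⟩⟩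
  loopless := ⟨fun u ⟨h, _⟩ => h rfl⟩

/-- `B` is an open packing: no two distinct vertices of `B` have a common neighbor. -/
def SimpleGraph.IsOpenPacking (G : SimpleGraph V) (B : Set V) : Prop :=
  ∀ u ∈ B, ∀ v ∈ B, u ≠ v → ∀ w, ¬(G.Adj w u ∧ G.Adj w v)

/-- The open packing partition number `p_o(G)`. -/
noncomputable def SimpleGraph.openPackingPartitionNum (G : SimpleGraph V) : ℕ :=
  sInf {k | ∃ f : V → Fin k, ∀ i, G.IsOpenPacking (f ⁻¹' {i})}

/-- `B` is a packing: distinct vertices of `B` have disjoint closed neighborhoods. -/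
def SimpleGraph.IsPacking (G : SimpleGraph V) (B : Set V) : Prop :=
  ∀ u ∈ B, ∀ v ∈ B, u ≠ v → ∀ w, ¬((G.Adj w u ∨ w = u) ∧ (G.Adj w v ∨ w = v))

/-- The 2-distance chromatic number `χ₂(G)`. -/
noncomputable def SimpleGraph.twoDistChromaticNum (G : SimpleGraph V) : ℕ :=
  sInf {k | ∃ f : V → Fin k, ∀ i, G.IsPacking (f ⁻¹' {i})}

/-- The open packing number `ρ_o(G)`. -/
noncomputable def SimpleGraph.openPackingNum (G : SimpleGraph V) [Fintype V] : ℕ :=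
  sSup {n | ∃ B : Finset V, G.IsOpenPacking ↑B ∧ B.card = n}

/-- The direct (tensor) product of graphs. -/
def SimpleGraph.directProd (G : SimpleGraph V) (H : SimpleGraph W) : SimpleGraph (V × W) where
  Adj a b := G.Adj a.1 b.1 ∧ H.Adj a.2 b.2
  symm := ⟨fun _ _ ⟨h1, h2⟩ => ⟨h1.symm, h2.symm⟩⟩
  loopless := ⟨fun a h => G.loopless.irrefl a.1 h.1⟩

/-- The lexicographic product of graphs. -/
def SimpleGraph.lexProd (G : SimpleGraph V) (H : SimpleGraph W) : SimpleGraph (V × W) where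
  Adj a b := G.Adj a.1 b.1 ∨ (a.1 = b.1 ∧ H.Adj a.2 b.2)
  symm := ⟨fun _ _ h => h.elim (fun h => Or.inl h.symm) (fun ⟨he, h⟩ => Or.inr ⟨he.symm, h.symm⟩)⟩
  loopless := ⟨fun a h => h.elim (fun h => G.loopless.irrefl a.1 h) (fun ⟨_, h⟩ => H.loopless.irrefl a.2 h)⟩

/-! A fibre `V × {b}` of `G × H` pulls open packings back to `G`: if `b' ~ b` in `H`, a common
neighbour `w` of `u, v` in `G` yields the common neighbour `(w, b')` of `(u, b), (v, b)`. Conversely,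
a product `A × B` of open packings is an open packing of `G × H`, since two distinct vertices of it
differ in a coordinate where a common neighbour would be forbidden; so the product of optimal
partitions of `G` and `H` partitions `G × H`. -/

namespace SimpleGraph

variable {V' : Type*}

theorem IsOpenPacking.preimage {G : SimpleGraph V} {G' : SimpleGraph V'} {B : Set V'}
    (hB : G'.IsOpenPacking B) {φ ψ : V → V'} (hφ : Function.Injective φ)
    (hadj : ∀ w u, G.Adj w u → G'.Adj (ψ w) (φ u)) : G.IsOpenPacking (φ ⁻¹' B) :=
  fun u hu v hv huv w ⟨hwu, hwv⟩ =>
    hB (φ u) hu (φ v) hv (hφ.ne huv) (ψ w) ⟨hadj w u hwu, hadj w v hwv⟩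

theorem IsOpenPacking.prod {G : SimpleGraph V} {H : SimpleGraph W} {A : Set V} {B : Set W}
    (hA : G.IsOpenPacking A) (hB : H.IsOpenPacking B) :
    (G.directProd H).IsOpenPacking (A ×ˢ B) := by
  rintro p ⟨hp₁, hp₂⟩ q ⟨hq₁, hq₂⟩ hpq w ⟨hwp, hwq⟩
  by_cases h₁ : p.1 = q.1
  · exact hB p.2 hp₂ q.2 hq₂ (fun h₂ => hpq (Prod.ext h₁ h₂)) w.2 ⟨hwp.2, hwq.2⟩
  · exact hA p.1 hp₁ q.1 hq₁ h₁ w.1 ⟨hwp.1, hwq.1⟩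

theorem openPackingPartitionNum_le {G : SimpleGraph V} {k : ℕ} (f : V → Fin k)
    (hf : ∀ i, G.IsOpenPacking (f ⁻¹' {i})) : G.openPackingPartitionNum ≤ k :=
  Nat.sInf_le ⟨f, hf⟩

theorem exists_openPackingPartition [Finite V] (G : SimpleGraph V) :
    ∃ f : V → Fin G.openPackingPartitionNum, ∀ i, G.IsOpenPacking (f ⁻¹' {i}) :=
  Nat.sInf_mem (s := {k | ∃ f : V → Fin k, ∀ i, G.IsOpenPacking (f ⁻¹' {i})})
    ⟨Nat.card V, Finite.equivFin V, fun _ _ hu _ hv huv _ _ =>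
      huv ((Finite.equivFin V).injective (hu.trans hv.symm))⟩

theorem openPackingPartitionNum_le_of_injective [Finite V'] {G : SimpleGraph V}
    {G' : SimpleGraph V'} {φ ψ : V → V'} (hφ : Function.Injective φ)
    (hadj : ∀ w u, G.Adj w u → G'.Adj (ψ w) (φ u)) :
    G.openPackingPartitionNum ≤ G'.openPackingPartitionNum := by
  obtain ⟨f, hf⟩ := G'.exists_openPackingPartition
  exact openPackingPartitionNum_le (f ∘ φ) fun i => (hf i).preimage hφ hadj

theorem openPackingPartitionNum_le_directProd_left [Finite V] [Finite W]
    (G : SimpleGraph V) (H : SimpleGraph W) (hH : ∃ b b', H.Adj b b') :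
    G.openPackingPartitionNum ≤ (G.directProd H).openPackingPartitionNum := by
  obtain ⟨b, b', hbb'⟩ := hH
  exact openPackingPartitionNum_le_of_injective (φ := fun v => (v, b)) (ψ := fun v => (v, b'))
    (fun _ _ h => congrArg Prod.fst h) fun _ _ hwu => ⟨hwu, hbb'.symm⟩

theorem openPackingPartitionNum_le_directProd_right [Finite V] [Finite W]
    (G : SimpleGraph V) (H : SimpleGraph W) (hG : ∃ a a', G.Adj a a') :
    H.openPackingPartitionNum ≤ (G.directProd H).openPackingPartitionNum := by
  obtain ⟨a, a', haa'⟩ := hG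
  exact openPackingPartitionNum_le_of_injective (φ := fun w => (a, w)) (ψ := fun w => (a', w))
    (fun _ _ h => congrArg Prod.snd h) fun _ _ hwu => ⟨haa'.symm, hwu⟩

theorem openPackingPartitionNum_directProd_le [Finite V] [Finite W]
    (G : SimpleGraph V) (H : SimpleGraph W) :
    (G.directProd H).openPackingPartitionNum ≤
      G.openPackingPartitionNum * H.openPackingPartitionNum := by
  obtain ⟨fG, hfG⟩ := G.exists_openPackingPartition
  obtain ⟨fH, hfH⟩ := H.exists_openPackingPartition
  refine openPackingPartitionNum_le (fun p => finProdFinEquiv (fG p.1, fH p.2)) fun i => ?_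
  have hclass : (fun p : V × W => finProdFinEquiv (fG p.1, fH p.2)) ⁻¹' {i} =
      (fG ⁻¹' {(finProdFinEquiv.symm i).1}) ×ˢ (fH ⁻¹' {(finProdFinEquiv.symm i).2}) := by
    ext p
    simp [← Equiv.eq_symm_apply, Prod.ext_iff]
  rw [hclass]
  exact (hfG _).prod (hfH _)

end SimpleGraph

theorem stmt_5 [Fintype V] [Fintype W] (G : SimpleGraph V) (H : SimpleGraph W)
    (hG : ∃ a b, G.Adj a b) (hH : ∃ a b, H.Adj a b) :
    max G.openPackingPartitionNum H.openPackingPartitionNum ≤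
        (G.directProd H).openPackingPartitionNum ∧
      (G.directProd H).openPackingPartitionNum ≤
        G.openPackingPartitionNum * H.openPackingPartitionNum :=
  ⟨max_le (openPackingPartitionNum_le_directProd_left G H hH)
      (openPackingPartitionNum_le_directProd_right G H hG),
    openPackingPartitionNum_directProd_le G H⟩
end

section
/- For any connected graph G of order n ≥ 2 with m edges, p_o(G) ≥ (1 + √(1 + 4(2m − n)/ρ_o(G)))/2. -/
open SimpleGraph

variable {V W : Type*}

/-!
Take a partition of `V` into `k = p_o(G)` open packings `B₁, …, B_k`. A vertex has at most one
neighbour in each part, so for every pair of parts `∑_{u ∈ B_i} |N(u) ∩ B_j| ≤ |B_i|`, which is at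
most `ρ_o(G)`. Bounding the diagonal terms by `|B_i|` and the `k(k-1)` others by `ρ_o(G)` gives
`2m ≤ n + k(k-1)ρ_o(G)`, and solving this quadratic inequality for `k` gives the bound.
-/

open Finset

namespace SimpleGraph

variable (G : SimpleGraph V)

theorem isOpenPacking_of_subsingleton {B : Set V} (hB : B.Subsingleton) : G.IsOpenPacking B :=
  fun _ ha _ hb hab => absurd (hB ha hb) hab

theorem IsOpenPacking.subsingleton_neighborSet_inter {G : SimpleGraph V} {B : Set V}
    (hB : G.IsOpenPacking B) (u : V) : (G.neighborSet u ∩ B).Subsingleton :=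
  fun a ha b hb => by_contra fun hab => hB a ha.2 b hb.2 hab u ⟨ha.1, hb.1⟩

theorem card_le_openPackingNum [Fintype V] {B : Finset V} (hB : G.IsOpenPacking B) :
    #B ≤ G.openPackingNum :=
  le_csSup ⟨Fintype.card V, by rintro _ ⟨B, -, rfl⟩; exact card_le_univ B⟩ ⟨B, hB, rfl⟩

theorem openPackingNum_pos [Fintype V] [Nonempty V] : 0 < G.openPackingNum := by
  obtain ⟨v⟩ := ‹Nonempty V›
  exact (card_pos.mpr (singleton_nonempty v)).trans_le
    (G.card_le_openPackingNum (G.isOpenPacking_of_subsingleton (by simp)))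

theorem exists_isOpenPacking_fibers_fin_openPackingPartitionNum [Finite V] :
    ∃ f : V → Fin G.openPackingPartitionNum, ∀ i, G.IsOpenPacking (f ⁻¹' {i}) := by
  obtain ⟨n, ⟨e⟩⟩ := Finite.exists_equiv_fin V
  have hne : {k | ∃ f : V → Fin k, ∀ i, G.IsOpenPacking (f ⁻¹' {i})}.Nonempty :=
    ⟨n, e, fun i =>
      G.isOpenPacking_of_subsingleton (Set.subsingleton_singleton.preimage e.injective)⟩
  exact Nat.sInf_mem hne

section Counting

variable [Fintype V] [DecidableRel G.Adj] {k : ℕ} {f : V → Fin k}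

theorem card_neighborFinset_filter_le_one (hf : ∀ i, G.IsOpenPacking (f ⁻¹' {i}))
    (u : V) (j : Fin k) : #{v ∈ G.neighborFinset u | f v = j} ≤ 1 :=
  card_le_one.mpr fun a ha b hb =>
    (hf j).subsingleton_neighborSet_inter u (by simpa using ha) (by simpa using hb)

theorem sum_card_neighborFinset_filter_le (hf : ∀ i, G.IsOpenPacking (f ⁻¹' {i}))
    (s : Finset V) (j : Fin k) : ∑ u ∈ s, #{v ∈ G.neighborFinset u | f v = j} ≤ #s :=
  (sum_le_card_nsmul _ _ 1 fun u _ => G.card_neighborFinset_filter_le_one hf u j).trans_eq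
    (smul_eq_mul _ _ |>.trans (mul_one _))

theorem sum_degree_fiber_le (hf : ∀ i, G.IsOpenPacking (f ⁻¹' {i})) {r : ℕ}
    (hr : ∀ i, #{v | f v = i} ≤ r) (i : Fin k) :
    ∑ u with f u = i, G.degree u ≤ #{v | f v = i} + (k - 1) * r := by
  set B : Finset V := {v | f v = i}
  have hdegree : ∀ u, G.degree u = ∑ j, #{v ∈ G.neighborFinset u | f v = j} := fun u =>
    card_eq_sum_card_fiberwise fun v _ => mem_coe.mpr (mem_univ (f v))
  have hoff : ∑ j ∈ univ.erase i, ∑ u ∈ B, #{v ∈ G.neighborFinset u | f v = j} ≤ (k - 1) * r :=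
    calc _ ≤ #(univ.erase i) • r := sum_le_card_nsmul _ _ r fun j _ =>
          (G.sum_card_neighborFinset_filter_le hf B j).trans (hr i)
      _ = (k - 1) * r := by simp
  calc ∑ u ∈ B, G.degree u
      = ∑ j ∈ univ.erase i, ∑ u ∈ B, #{v ∈ G.neighborFinset u | f v = j}
          + ∑ u ∈ B, #{v ∈ G.neighborFinset u | f v = i} := by
        simp_rw [hdegree, sum_comm (s := B), sum_erase_add _ _ (mem_univ i)]
    _ ≤ (k - 1) * r + #B := add_le_add hoff (G.sum_card_neighborFinset_filter_le hf B i)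
    _ = #B + (k - 1) * r := add_comm _ _

theorem two_mul_card_edgeFinset_le [DecidableEq V] (hf : ∀ i, G.IsOpenPacking (f ⁻¹' {i}))
    {r : ℕ} (hr : ∀ i, #{v | f v = i} ≤ r) :
    2 * #G.edgeFinset ≤ Fintype.card V + k * (k - 1) * r :=
  calc 2 * #G.edgeFinset = ∑ i, ∑ u with f u = i, G.degree u := by
        rw [← G.sum_degrees_eq_twice_card_edges,
          sum_fiberwise_of_maps_to fun u _ => mem_univ (f u)]
    _ ≤ ∑ i : Fin k, (#{v | f v = i} + (k - 1) * r) :=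
        sum_le_sum fun i _ => G.sum_degree_fiber_le hf hr i
    _ = Fintype.card V + k * (k - 1) * r := by
        rw [sum_add_distrib, ← card_eq_sum_card_fiberwise fun v _ => mem_coe.mpr (mem_univ (f v))]
        simp [mul_assoc]

end Counting

end SimpleGraph

theorem half_one_add_sqrt_le {a ρ k : ℝ} (hρ : 0 < ρ) (hk : 1 ≤ 2 * k)
    (h : a ≤ k * (k - 1) * ρ) : (1 + √(1 + 4 * a / ρ)) / 2 ≤ k := by
  have hdiv : a / ρ ≤ k * (k - 1) := (div_le_iff₀ hρ).mpr h
  have hsqrt : √(1 + 4 * a / ρ) ≤ 2 * k - 1 := by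
    rw [Real.sqrt_le_iff, mul_div_assoc]
    constructor <;> nlinarith
  linarith

theorem stmt_9_general [Fintype V] [DecidableEq V] (G : SimpleGraph V) [DecidableRel G.Adj]
    (hn : 2 ≤ Fintype.card V) :
    (1 + Real.sqrt (1 + 4 * (2 * (G.edgeFinset.card : ℝ) - Fintype.card V) /
        G.openPackingNum)) / 2 ≤ G.openPackingPartitionNum := by
  have : Nonempty V := Fintype.card_pos_iff.mp (by omega)
  obtain ⟨f, hf⟩ := G.exists_isOpenPacking_fibers_fin_openPackingPartitionNum
  have hk : 0 < G.openPackingPartitionNum := Fin.pos (f (Classical.arbitrary V))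
  have hcount := G.two_mul_card_edgeFinset_le hf fun i =>
    G.card_le_openPackingNum (B := {v | f v = i}) (by rw [coe_filter_univ]; exact hf i)
  apply half_one_add_sqrt_le (by exact_mod_cast G.openPackingNum_pos)
    (by norm_cast; omega)
  rw [sub_le_iff_le_add', ← Nat.cast_pred hk]
  exact_mod_cast hcount

theorem stmt_9 [Fintype V] [DecidableEq V] (G : SimpleGraph V) [DecidableRel G.Adj]
    (hc : G.Connected) (hn : 2 ≤ Fintype.card V) :
    (1 + Real.sqrt (1 + 4 * (2 * (G.edgeFinset.card : ℝ) - Fintype.card V) /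
        G.openPackingNum)) / 2 ≤ G.openPackingPartitionNum :=
  stmt_9_general G hn
end

section
/- For any tree T on at least two vertices, p_o(T) = Δ(T). -/
open SimpleGraph

variable {V W : Type*}

/-!
An open-packing partition of `G` into `k` parts is the same as a proper `k`-colouring of
`G.twoStep`. Each neighbourhood `N(v)` is a clique of `G.twoStep`, so at least `Δ` colours are
needed. Conversely, root the tree at `r`: a vertex `u` with `dist r u ≤ dist r v` can share a
neighbour with `v` only through the parent `p` of `v`, so such `u` lie in `N(p) \ {v}` and there are
fewer than `Δ` of them. Colouring greedily by increasing distance from `r` thus needs only `Δ`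
colours.
-/
theorem Set.exists_notMem_image_of_ncard_lt {α β : Type*} [Finite α] [Finite β] (f : α → β)
    {s : Set α} (hs : s.ncard < Nat.card β) : ∃ b, b ∉ f '' s := by
  by_contra! hall
  have := Set.ncard_image_le (f := f) (s := s)
  rw [Set.eq_univ_of_forall hall, Set.ncard_univ] at this
  omega

namespace SimpleGraph

theorem forall_isOpenPacking_fiber_iff {α : Type*} (G : SimpleGraph V) (f : V → α) :
    (∀ i, G.IsOpenPacking (f ⁻¹' {i})) ↔ ∀ u v, G.twoStep.Adj u v → f u ≠ f v := by
  constructor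
  · rintro hf u v ⟨huv, w, hwu, hwv⟩ hfuv
    exact hf (f v) u hfuv v rfl huv w ⟨hwu, hwv⟩
  · rintro hf i u hu v hv huv w ⟨hwu, hwv⟩
    exact hf u v ⟨huv, w, hwu, hwv⟩ (hu.trans hv.symm)

theorem openPackingPartitionNum_eq_sInf (G : SimpleGraph V) :
    G.openPackingPartitionNum = sInf {k | G.twoStep.Colorable k} := by
  rw [openPackingPartitionNum]
  congr 1
  ext k
  exact ⟨fun ⟨f, hf⟩ => ⟨Coloring.mk f ((forall_isOpenPacking_fiber_iff G f).mp hf _ _)⟩,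
    fun ⟨C⟩ => ⟨C, (forall_isOpenPacking_fiber_iff G C).mpr fun _ _ => C.valid⟩⟩

theorem isClique_twoStep_neighborSet (G : SimpleGraph V) (v : V) :
    G.twoStep.IsClique (G.neighborSet v) :=
  fun _ hx _ hy hxy => ⟨hxy, v, hx, hy⟩

theorem maxDegree_le_of_colorable_twoStep [Fintype V] {G : SimpleGraph V} [DecidableRel G.Adj]
    {k : ℕ} (h : G.twoStep.Colorable k) : G.maxDegree ≤ k :=
  maxDegree_le_of_forall_degree_le _ _ fun v => by
    rw [← card_neighborFinset_eq_degree]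
    exact (coe_neighborFinset G v ▸ G.isClique_twoStep_neighborSet v).card_le_of_colorable h

-- Greedy colouring by increasing rank; ties are broken arbitrarily, hence the `≤`.
theorem colorable_of_forall_ncard_lt [Finite V] {α : Type*} [LinearOrder α] (H : SimpleGraph V)
    (rank : V → α) {k : ℕ} (h : ∀ v, {u | H.Adj u v ∧ rank u ≤ rank v}.ncard < k) :
    H.Colorable k := by
  classical
  have := Fintype.ofFinite V
  suffices ∀ s : Finset V, ∃ f : V → Fin k, ∀ u ∈ s, ∀ v ∈ s, H.Adj u v → f u ≠ f v by
    obtain ⟨f, hf⟩ := this Finset.univ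
    exact ⟨Coloring.mk f fun huv => hf _ (Finset.mem_univ _) _ (Finset.mem_univ _) huv⟩
  intro s
  induction s using Finset.induction_on_max_value rank with
  | empty => exact ⟨fun v => ⟨0, (h v).trans_le' (Nat.zero_le _)⟩, by simp⟩
  | insert a s ha hmax ih =>
    obtain ⟨f, hf⟩ := ih
    obtain ⟨c, hc⟩ := Set.exists_notMem_image_of_ncard_lt f
      ((h a).trans_eq (Nat.card_fin k).symm)
    have hca : ∀ v ∈ s, H.Adj v a → f v ≠ c := fun v hv hva hfv => hc ⟨v, ⟨hva, hmax v hv⟩, hfv⟩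
    refine ⟨Function.update f a c, ?_⟩
    intro u hu v hv huv
    rw [Finset.mem_insert] at hu hv
    rcases hu with rfl | hu <;> rcases hv with rfl | hv
    · exact (H.ne_of_adj huv rfl).elim
    · rw [Function.update_self, Function.update_of_ne (ne_of_mem_of_not_mem hv ha)]
      exact (hca v hv huv.symm).symm
    · rw [Function.update_self, Function.update_of_ne (ne_of_mem_of_not_mem hu ha)]
      exact hca u hu huv
    · rw [Function.update_of_ne (ne_of_mem_of_not_mem hu ha),
        Function.update_of_ne (ne_of_mem_of_not_mem hv ha)]
      exact hf u hu v hv huv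

variable {G : SimpleGraph V}

theorem IsTree.eq_of_adj_of_dist_lt (hG : G.IsTree) (r : V) {v p q : V} (hp : G.Adj p v)
    (hq : G.Adj q v) (hpd : G.dist r p < G.dist r v) (hqd : G.dist r q < G.dist r v) :
    p = q := by
  classical
  obtain ⟨P, hP, -⟩ := (hG.connected r v).exists_path_of_dist
  suffices ∀ p, G.Adj p v → G.dist r p < G.dist r v → p = P.penultimate from
    (this p hp hpd).trans (this q hq hqd).symm
  intro p hp hpd
  obtain ⟨Q, hQ, hQlen⟩ := (hG.connected r p).exists_path_of_dist
  have hvQ : v ∉ Q.support := fun hv =>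
    (dist_le (Q.takeUntil v hv)).trans (Q.length_takeUntil_le_length hv) |>.not_gt (hQlen ▸ hpd)
  exact hG.isAcyclic.eq_penultimate_of_adj_end hP hp.symm
    (hG.isAcyclic.mem_support_of_ne_mem_support_of_adj_of_isPath hP hQ hp.symm hvQ)

theorem IsTree.dist_lt_of_adj_of_adj (hG : G.IsTree) (r : V) {u v w : V} (huv : u ≠ v)
    (hu : G.Adj w u) (hv : G.Adj w v) (hd : G.dist r u ≤ G.dist r v) :
    G.dist r w < G.dist r v := by
  rcases hG.dist_eq_dist_add_one_of_adj r hv with h | h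
  · exact absurd (hG.eq_of_adj_of_dist_lt r hu.symm hv.symm (by omega) (by omega)) huv
  · omega

theorem IsTree.ncard_twoStep_adj_dist_le_lt_maxDegree [Fintype V] [DecidableRel G.Adj]
    (hG : G.IsTree) (hΔ : 0 < G.maxDegree) (r v : V) :
    {u | G.twoStep.Adj u v ∧ G.dist r u ≤ G.dist r v}.ncard < G.maxDegree := by
  classical
  by_cases hpar : ∃ p, G.Adj p v ∧ G.dist r p < G.dist r v
  · obtain ⟨p, hp, hpd⟩ := hpar
    have hsub : {u | G.twoStep.Adj u v ∧ G.dist r u ≤ G.dist r v} ⊆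
        ↑((G.neighborFinset p).erase v) := by
      rintro u ⟨⟨huv, w, hwu, hwv⟩, hd⟩
      obtain rfl :=
        hG.eq_of_adj_of_dist_lt r hwv hp (hG.dist_lt_of_adj_of_adj r huv hwu hwv hd) hpd
      simpa [huv] using hwu
    have hdeg := G.degree_le_maxDegree p
    have hpos : 0 < G.degree p := G.degree_pos_iff_exists_adj p |>.mpr ⟨v, hp⟩
    calc _ ≤ ((G.neighborFinset p).erase v).card :=
          (Set.ncard_le_ncard hsub).trans_eq (Set.ncard_coe_finset _)
      _ = G.degree p - 1 := by
        rw [Finset.card_erase_of_mem (by simpa using hp), card_neighborFinset_eq_degree]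
      _ < G.maxDegree := by omega
  · have hempty : {u | G.twoStep.Adj u v ∧ G.dist r u ≤ G.dist r v} = ∅ :=
      Set.eq_empty_of_forall_notMem fun _ ⟨⟨huv, w, hwu, hwv⟩, hd⟩ =>
        hpar ⟨w, hwv, hG.dist_lt_of_adj_of_adj r huv hwu hwv hd⟩
    rwa [hempty, Set.ncard_empty]

theorem IsTree.colorable_twoStep_maxDegree [Fintype V] [DecidableRel G.Adj] (hG : G.IsTree)
    (hΔ : 0 < G.maxDegree) : G.twoStep.Colorable G.maxDegree :=
  have r := hG.connected.nonempty.some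
  colorable_of_forall_ncard_lt _ (G.dist r) (hG.ncard_twoStep_adj_dist_le_lt_maxDegree hΔ r)

end SimpleGraph

theorem stmt_12 [Fintype V] (G : SimpleGraph V) [DecidableRel G.Adj]
    (ht : G.IsTree) (h2 : 2 ≤ Fintype.card V) :
    G.openPackingPartitionNum = G.maxDegree := by
  have : Nontrivial V := Fintype.one_lt_card_iff_nontrivial.mp h2
  have hΔ : 0 < G.maxDegree :=
    ht.connected.preconnected.minDegree_pos_of_nontrivial.trans_le G.minDegree_le_maxDegree
  rw [openPackingPartitionNum_eq_sInf]
  exact IsLeast.csInf_eq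
    ⟨ht.colorable_twoStep_maxDegree hΔ, fun _ => maxDegree_le_of_colorable_twoStep⟩
end
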